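/- For any 1 ≤ s < s' ≤ r and any subset A ⊆ [q] with A ⊉ [l] such that |A ∩ [l]| = l−1 and l+1 ∈ A, one has (σ_{e_s}σ_{e_{s'}} + σ_{e_{s'}}σ_{e_s})(ε_A) = 0 in the pivot resolution T_{1,…,l}. -/

import Mathlib

open MvPolynomial Finset

noncomputable section

/-- `fsign A B` is `0` if `A ∩ B ≠ ∅`, and otherwise `(−1)^{p(A,B)}` where `p(A,B)`
is the number of pairs `(a,b) ∈ A × B` with `a > b`. -/
def fsign {α : Type*} [LinearOrder α] [DecidableEq α] (A B : Finset α) : ℤ :=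
  if A ∩ B = ∅ then (-1 : ℤ) ^ (((A ×ˢ B).filter fun p => p.2 < p.1).card) else 0

/-- The total module underlying the Taylor complex: free over `Q = k[x_1,…,x_n]`
with basis `ε_τ` indexed by all subsets `τ ⊆ [q]`. -/
abbrev TotMod (k : Type*) [Field k] (n q : ℕ) : Type _ :=
  Finset (Fin q) →₀ MvPolynomial (Fin n) k

/-- `m_τ = lcm{m_i : i ∈ τ}`, where `m_i` is the monomial with exponent vector `D i`. -/
def lcmMono (k : Type*) [Field k] (n q : ℕ) (D : Fin q → (Fin n →₀ ℕ))
    (τ : Finset (Fin q)) : MvPolynomial (Fin n) k :=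
  monomial (τ.sup D) (1 : k)

/-- The monomial ideal `I = (m_1, …, m_q)`. -/
def monIdeal (k : Type*) [Field k] (n q : ℕ) (D : Fin q → (Fin n →₀ ℕ)) :
    Ideal (MvPolynomial (Fin n) k) :=
  Ideal.span (Set.range fun i => monomial (D i) (1 : k))

/-- The Taylor differential `∂(ε_τ) = Σ_{j∈τ} sign(j, τ∖{j}) (m_τ/m_{τ∖{j}}) ε_{τ∖{j}}`,
as a linear endomorphism of the total module. -/
def taylorD (k : Type*) [Field k] (n q : ℕ) (D : Fin q → (Fin n →₀ ℕ)) :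
    TotMod k n q →ₗ[MvPolynomial (Fin n) k] TotMod k n q :=
  Finsupp.linearCombination _ fun τ =>
    ∑ j ∈ τ, Finsupp.single (τ \ {j})
      ((fsign {j} (τ \ {j}) : MvPolynomial (Fin n) k) *
        monomial (τ.sup D - (τ \ {j}).sup D) (1 : k))

/-- The degree-`i` piece of the subcomplex of the Taylor complex spanned by the
`ε_τ` with `τ ∈ Ω`: the free submodule with basis `{ε_τ : τ ∈ Ω, |τ| = i}`. -/
def piece (k : Type*) [Field k] (n q : ℕ) (Ω : Set (Finset (Fin q))) (i : ℕ) :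
    Submodule (MvPolynomial (Fin n) k) (TotMod k n q) :=
  Finsupp.supported _ _ {τ | τ ∈ Ω ∧ τ.card = i}

/-- The subcomplex of the Taylor complex spanned by all `ε_τ` with `τ ∈ Ω`. -/
def subcx (k : Type*) [Field k] (n q : ℕ) (Ω : Set (Finset (Fin q))) :
    Submodule (MvPolynomial (Fin n) k) (TotMod k n q) :=
  Finsupp.supported _ _ Ω

/-- The index family of the pivot complex `T_S`: all `τ` with `τ ⊉ S`. -/
def pivotΩ {q : ℕ} (S : Finset (Fin q)) : Set (Finset (Fin q)) := {τ | ¬ S ⊆ τ}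

/-- The subcomplex of the Taylor complex spanned by `{ε_τ : τ ∈ Ω}` is a resolution
of `Q/I`: it is exact in homological degrees `≥ 1`, and its zeroth homology is
identified with `Q/I` via the augmentation `ε_∅ ↦ 1`. -/
def IsResolutionOf (k : Type*) [Field k] (n q : ℕ) (D : Fin q → (Fin n →₀ ℕ))
    (Ω : Set (Finset (Fin q))) : Prop :=
  (∀ i : ℕ, ∀ x ∈ piece k n q Ω (i + 1), taylorD k n q D x = 0 →
      ∃ y ∈ piece k n q Ω (i + 2), taylorD k n q D y = x) ∧
  (∀ x ∈ piece k n q Ω 0,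
      (x (∅ : Finset (Fin q)) ∈ monIdeal k n q D ↔
        ∃ y ∈ piece k n q Ω 1, taylorD k n q D y = x))

/-- The Scarf set of `I`: all `t` such that there are two distinct subsets
`τ ≠ τ'` of `[q]` with `|τ| = t` and `m_τ = m_{τ'}`.  The Scarf number of `I`
is `sInf` of this set; `scarf(I) = ∞` corresponds to this set being empty. -/
def scarfSet (k : Type*) [Field k] (n q : ℕ) (D : Fin q → (Fin n →₀ ℕ)) : Set ℕ :=
  {t | ∃ τ τ' : Finset (Fin q), τ ≠ τ' ∧ τ.card = t ∧
        lcmMono k n q D τ = lcmMono k n q D τ'}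


/-- The index set `[l] = {1,…,l}`, realized as the first `l` elements of `Fin q`. -/
def Lset (q l : ℕ) : Finset (Fin q) :=
  Finset.univ.filter fun i => (i : ℕ) < l

/-- The pivot index `l+1`, realized as the element of `Fin q` with value `l`. -/
def pivElt (q l : ℕ) (hq : l < q) : Fin q := ⟨l, hq⟩

/-- The unique element `t` of `[l] ∖ A` (when it exists). -/
def tOf (q l : ℕ) (hq : l < q) (A : Finset (Fin q)) : Fin q :=
  if h : (Lset q l \ A).Nonempty then (Lset q l \ A).min' h else pivElt q l hq

/-- The sum `Σ_{j ∈ J} sign(j,A) a_{sj} (m_j m_A / m_{A∪{j}}) ε_{A∪{j}}`,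
where `c j = a_{sj}`. -/
def sigTerm (k : Type*) [Field k] (n q : ℕ) (D : Fin q → (Fin n →₀ ℕ))
    (c : Fin q → MvPolynomial (Fin n) k) (A J : Finset (Fin q)) : TotMod k n q :=
  ∑ j ∈ J, Finsupp.single (insert j A)
    ((fsign {j} A : MvPolynomial (Fin n) k) * c j *
      monomial (D j + A.sup D - (insert j A).sup D) (1 : k))

/-- The correction term
`(−1)^{l+1} sign(t,A) a_{st} Σ_{i∈[l]} sign(i, A∪{t}∖{i})
  (m_t m_A / m_{A∪{t}∪{l+1}∖{i}}) ε_{A∪{t}∪{l+1}∖{i}}`. -/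
def sigCorr (k : Type*) [Field k] (n q l : ℕ) (hq : l < q)
    (D : Fin q → (Fin n →₀ ℕ)) (c : Fin q → MvPolynomial (Fin n) k)
    (A : Finset (Fin q)) (t : Fin q) : TotMod k n q :=
  ∑ i ∈ Lset q l, Finsupp.single ((insert (pivElt q l hq) (insert t A)) \ {i})
    ((-1 : MvPolynomial (Fin n) k) ^ (l + 1) *
      (fsign {t} A : MvPolynomial (Fin n) k) * c t *
      (fsign {i} (insert t A \ {i}) : MvPolynomial (Fin n) k) *
      monomial (D t + A.sup D - ((insert (pivElt q l hq) (insert t A)) \ {i}).sup D)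
        (1 : k))

/-- The homotopy `σ_{e_s}` (for coefficients `c j = a_{sj}`), defined on basis
elements `ε_A` by the three-case formula of Theorem 5.1 of the paper. -/
def sigmaMap (k : Type*) [Field k] (n q l : ℕ) (hq : l < q)
    (D : Fin q → (Fin n →₀ ℕ)) (c : Fin q → MvPolynomial (Fin n) k) :
    TotMod k n q →ₗ[MvPolynomial (Fin n) k] TotMod k n q :=
  Finsupp.linearCombination _ fun A =>
    if (A ∩ Lset q l).card ≠ l - 1 then
      sigTerm k n q D c A Aᶜ
    else if pivElt q l hq ∈ A then
      sigTerm k n q D c A (insert (tOf q l hq A) A)ᶜ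
    else
      sigTerm k n q D c A (insert (tOf q l hq A) A)ᶜ +
        sigCorr k n q l hq D c A (tOf q l hq A)

/-- The element `a_s = Σ_{j=1}^q a_{sj} m_j`, for coefficients `c j = a_{sj}`. -/
def aElt (k : Type*) [Field k] (n q : ℕ) (D : Fin q → (Fin n →₀ ℕ))
    (c : Fin q → MvPolynomial (Fin n) k) : MvPolynomial (Fin n) k :=
  ∑ j : Fin q, c j * monomial (D j) (1 : k)
end

/-! Once `l+1 ∈ A` and `[l] ∖ A = {t}`, every `A ∪ {j}` with `j ∉ A ∪ {t}` is again of this kind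
with the same `t`, so on `ε_A` and on all the `ε_{A∪{j}}` the maps `σ_{e_s}` only involve their
Koszul part `Σ_{j ∉ A∪{t}}`. Two such Koszul steps add `j` then `j'`, resp. `j'` then `j`,
with the same monomial coefficient `m_j m_{j'} m_A / m_{A∪{j,j'}}` and opposite signs, so the
anticommutator cancels term by term. -/

section Koszul

variable {k : Type*} [Field k] {n q : ℕ} (D : Fin q → (Fin n →₀ ℕ))

lemma fsign_singleton_of_notMem {α : Type*} [LinearOrder α] [DecidableEq α] {j : α}
    {B : Finset α} (h : j ∉ B) : fsign {j} B = (-1 : ℤ) ^ #{b ∈ B | b < j} := by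
  rw [fsign, if_pos (singleton_inter_of_notMem h), singleton_product, filter_map, card_map]
  rfl

lemma fsign_mul_fsign_insert_comm {α : Type*} [LinearOrder α] [DecidableEq α] {j j' : α}
    {A : Finset α} (hj : j ∉ A) (hj' : j' ∉ A) (hne : j ≠ j') :
    fsign {j} A * fsign {j'} (insert j A) = -(fsign {j'} A * fsign {j} (insert j' A)) := by
  have count_insert : ∀ {x y : α}, x ∉ A →
      #{b ∈ insert x A | b < y} = #{b ∈ A | b < y} + if x < y then 1 else 0 := by
    intro x y hx
    rw [filter_insert]
    split_ifs
    · rw [card_insert_of_notMem (by simp [hx])]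
    · rfl
  rw [fsign_singleton_of_notMem hj, fsign_singleton_of_notMem hj',
    fsign_singleton_of_notMem (by simp [hne.symm, hj']),
    fsign_singleton_of_notMem (by simp [hne, hj]), count_insert hj, count_insert hj']
  rcases hne.lt_or_gt with h | h
  · rw [if_pos h, if_neg h.asymm]; ring
  · rw [if_neg h.asymm, if_pos h]; ring

lemma add_tsub_sup_add_add_sup_tsub_sup {ι : Type*} (d d' a : ι →₀ ℕ) :
    (d + a - d ⊔ a) + (d' + d ⊔ a - d' ⊔ (d ⊔ a)) = d + d' + a - d' ⊔ (d ⊔ a) := by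
  ext x
  simp only [Finsupp.add_apply, Finsupp.tsub_apply, Finsupp.sup_apply]
  omega

noncomputable def sigCoef (c : Fin q → MvPolynomial (Fin n) k) (A : Finset (Fin q)) (j : Fin q) :
    MvPolynomial (Fin n) k :=
  (fsign {j} A : MvPolynomial (Fin n) k) * c j *
    monomial (D j + A.sup D - (insert j A).sup D) (1 : k)

lemma sigTerm_eq_sum_sigCoef (c : Fin q → MvPolynomial (Fin n) k) (A J : Finset (Fin q)) :
    sigTerm k n q D c A J = ∑ j ∈ J, Finsupp.single (insert j A) (sigCoef D c A j) :=
  rfl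

lemma sigCoef_mul_sigCoef_insert (c c' : Fin q → MvPolynomial (Fin n) k) (A : Finset (Fin q))
    (j j' : Fin q) :
    sigCoef D c A j * sigCoef D c' (insert j A) j' =
      (fsign {j} A * fsign {j'} (insert j A) : ℤ) * (c j * c' j') *
        monomial (D j + D j' + A.sup D - (insert j' (insert j A)).sup D) (1 : k) := by
  have hexp := add_tsub_sup_add_add_sup_tsub_sup (D j) (D j') (A.sup D)
  simp only [← sup_insert] at hexp
  rw [sigCoef, sigCoef, ← hexp, ← one_mul (1 : k), ← monomial_mul, one_mul]
  push_cast
  ring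

lemma sigCoef_mul_sigCoef_insert_antisymm (c c' : Fin q → MvPolynomial (Fin n) k)
    {A : Finset (Fin q)} {j j' : Fin q} (hj : j ∉ A) (hj' : j' ∉ A) (hne : j ≠ j') :
    sigCoef D c A j * sigCoef D c' (insert j A) j' =
      -(sigCoef D c' A j' * sigCoef D c (insert j' A) j) := by
  rw [sigCoef_mul_sigCoef_insert, sigCoef_mul_sigCoef_insert,
    fsign_mul_fsign_insert_comm hj hj' hne, insert_comm j' j, add_comm (D j')]
  push_cast
  ring

lemma sum_smul_sigTerm_add_sum_smul_sigTerm_eq_zero (c c' : Fin q → MvPolynomial (Fin n) k)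
    {A J : Finset (Fin q)} (hAJ : Disjoint A J) :
    ∑ j ∈ J, sigCoef D c' A j • sigTerm k n q D c (insert j A) (J.erase j) +
      ∑ j ∈ J, sigCoef D c A j • sigTerm k n q D c' (insert j A) (J.erase j) = 0 := by
  simp only [sigTerm_eq_sum_sigCoef, smul_sum, Finsupp.smul_single, smul_eq_mul]
  rw [sum_comm' (t' := J) (s' := J.erase) (fun x y => by simp only [mem_erase]; tauto),
    ← sum_add_distrib]
  refine sum_eq_zero fun j hj => ?_
  rw [← sum_add_distrib]
  refine sum_eq_zero fun j' hj' => ?_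
  obtain ⟨hne, hj'J⟩ := mem_erase.mp hj'
  rw [insert_comm, ← Finsupp.single_add,
    sigCoef_mul_sigCoef_insert_antisymm D c' c (disjoint_right.mp hAJ hj'J)
      (disjoint_right.mp hAJ hj) hne, neg_add_cancel, Finsupp.single_zero]

end Koszul

section Pivot

variable {k : Type*} [Field k] {n q l : ℕ} (hq : l < q) (D : Fin q → (Fin n →₀ ℕ))

lemma card_Lset (h : l ≤ q) : #(Lset q l) = l := by
  have : Lset q l = univ.map (Fin.castLEEmb h) := by
    ext i
    simp only [Lset, mem_filter, mem_univ, true_and, mem_map, Fin.castLEEmb_apply]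
    exact ⟨fun hi => ⟨⟨i, hi⟩, rfl⟩, by rintro ⟨i, -, rfl⟩; exact i.2⟩
  simp [this]

lemma Lset_sdiff_eq_singleton_tOf {A : Finset (Fin q)} (hnsub : ¬ Lset q l ⊆ A)
    (hcard : #(A ∩ Lset q l) = l - 1) : Lset q l \ A = {tOf q l hq A} := by
  have hl : 1 ≤ l := by
    by_contra! h
    exact hnsub (by simp [Lset, Nat.lt_one_iff.mp h])
  obtain ⟨t, ht⟩ : ∃ t, Lset q l \ A = {t} := by
    rw [← card_eq_one, card_sdiff, hcard, card_Lset hq.le]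
    omega
  simp [tOf, ht]

lemma tOf_insert_of_notMem_Lset {A : Finset (Fin q)} {j : Fin q} (hj : j ∉ Lset q l) :
    tOf q l hq (insert j A) = tOf q l hq A := by
  simp only [tOf, sdiff_insert_of_notMem hj]

lemma sigmaMap_single_of_pivElt_mem (c : Fin q → MvPolynomial (Fin n) k) {A : Finset (Fin q)}
    (hcard : #(A ∩ Lset q l) = l - 1) (hpiv : pivElt q l hq ∈ A) (x : MvPolynomial (Fin n) k) :
    sigmaMap k n q l hq D c (Finsupp.single A x) =
      x • sigTerm k n q D c A (insert (tOf q l hq A) A)ᶜ := by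
  rw [sigmaMap, Finsupp.linearCombination_single, if_neg (not_not.mpr hcard), if_pos hpiv]

lemma sigmaMap_sigmaMap_single_of_pivElt_mem (c c' : Fin q → MvPolynomial (Fin n) k)
    {A : Finset (Fin q)} (hnsub : ¬ Lset q l ⊆ A) (hcard : #(A ∩ Lset q l) = l - 1)
    (hpiv : pivElt q l hq ∈ A) :
    sigmaMap k n q l hq D c' (sigmaMap k n q l hq D c (Finsupp.single A 1)) =
      ∑ j ∈ (insert (tOf q l hq A) A)ᶜ, sigCoef D c A j •
        sigTerm k n q D c' (insert j A) ((insert (tOf q l hq A) A)ᶜ.erase j) := by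
  have hL : Lset q l ⊆ insert (tOf q l hq A) A := by
    rw [insert_eq, ← Lset_sdiff_eq_singleton_tOf hq hnsub hcard, sdiff_union_self_eq_union]
    exact subset_union_left
  rw [sigmaMap_single_of_pivElt_mem hq D c hcard hpiv, one_smul, sigTerm_eq_sum_sigCoef, map_sum]
  refine sum_congr rfl fun j hj => ?_
  have hjL : j ∉ Lset q l := fun h => mem_compl.mp hj (hL h)
  rw [sigmaMap_single_of_pivElt_mem hq D c' (by rwa [insert_inter_of_notMem hjL])
    (mem_insert_of_mem hpiv), tOf_insert_of_notMem_Lset hq hjL, insert_comm, compl_insert]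

end Pivot

theorem sigma_anticomm_on_basis_codim_one_general {k : Type*} [Field k] {n q l : ℕ}
    (hq : l < q)
    (D : Fin q → (Fin n →₀ ℕ))
    (r : ℕ) (a : Fin r → Fin q → MvPolynomial (Fin n) k)
    (s s' : Fin r) (A : Finset (Fin q))
    (hnsub : ¬ Lset q l ⊆ A) (hcard : (A ∩ Lset q l).card = l - 1)
    (hpiv : pivElt q l hq ∈ A) :
    sigmaMap k n q l hq D (a s) (sigmaMap k n q l hq D (a s') (Finsupp.single A 1)) +
      sigmaMap k n q l hq D (a s') (sigmaMap k n q l hq D (a s) (Finsupp.single A 1)) =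
    0 := by
  rw [sigmaMap_sigmaMap_single_of_pivElt_mem hq D _ _ hnsub hcard hpiv,
    sigmaMap_sigmaMap_single_of_pivElt_mem hq D _ _ hnsub hcard hpiv]
  exact sum_smul_sigTerm_add_sum_smul_sigTerm_eq_zero D (a s) (a s')
    (disjoint_left.mpr fun i hi => by simp [hi])

/-- **Lemma 5.8 of the paper.**
For any `1 ≤ s < s' ≤ r` and any `A ⊆ [q]` with `A ⊉ [l]`, `|A ∩ [l]| = l−1`
and `l+1 ∈ A`, one has `(σ_{e_s}σ_{e_{s'}} + σ_{e_{s'}}σ_{e_s})(ε_A) = 0` in the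
pivot resolution `T_{1,…,l}`. -/
theorem sigma_anticomm_on_basis_codim_one {k : Type*} [Field k] {n q l : ℕ}
    (hl : 2 ≤ l) (hq : l < q)
    (D : Fin q → (Fin n →₀ ℕ))
    (hne : ∀ i : Fin q, D i ≠ 0)
    (hmin : ∀ i j : Fin q, i ≠ j → ¬ lcmMono k n q D {i} ∣ lcmMono k n q D {j})
    (hgap : lcmMono k n q D {pivElt q l hq} ∣ lcmMono k n q D (Lset q l))
    (r : ℕ) (a : Fin r → Fin q → MvPolynomial (Fin n) k)
    (s s' : Fin r) (hss' : s < s') (A : Finset (Fin q))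
    (hnsub : ¬ Lset q l ⊆ A) (hcard : (A ∩ Lset q l).card = l - 1)
    (hpiv : pivElt q l hq ∈ A) :
    sigmaMap k n q l hq D (a s) (sigmaMap k n q l hq D (a s') (Finsupp.single A 1)) +
      sigmaMap k n q l hq D (a s') (sigmaMap k n q l hq D (a s) (Finsupp.single A 1)) =
    0 :=
  sigma_anticomm_on_basis_codim_one_general hq D r a s s' A hnsub hcard hpiv
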